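/- arXiv:2212.01781 — 2 statements merged into one kernel-verified Lean document; each statement's English description precedes it below -/
import Mathlib

section
/- Let G be a finite group and H a non-trivial normal subgroup of G of odd order. Then H is a (κ,τ)-regular set of G for every pair of integers κ and τ satisfying 0 ≤ κ ≤ |H| − 1, 1 ≤ τ ≤ |H| and gcd(2, |H| − 1) ∣ κ. -/
open Pointwise

/-- `R` is a `(κ,τ)`-regular set of the Cayley graph `Cay(G,X)`: every vertex in `R`
has exactly `κ` neighbours in `R`, and every vertex outside `R` has exactly `τ`
neighbours in `R`.  In `Cay(G,X)`, `g` is adjacent to `s` iff `g⁻¹ * s ∈ X`. -/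
def IsRegularSetOfCayley {G : Type*} [Group G] (X R : Set G) (κ τ : ℤ) : Prop :=
  (∀ r ∈ R, ({s ∈ R | r⁻¹ * s ∈ X}.ncard : ℤ) = κ) ∧
  (∀ g : G, g ∉ R → ({s ∈ R | g⁻¹ * s ∈ X}.ncard : ℤ) = τ)

/-- `X` is a valid connection set for a Cayley graph on `G`: it avoids the identity
and is inverse-closed. -/
def IsConnectionSet {G : Type*} [Group G] (X : Set G) : Prop :=
  (1 : G) ∉ X ∧ X⁻¹ = X

/-- `R` is a `(κ,τ)`-regular set of the group `G`: it is a `(κ,τ)`-regular set of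
some Cayley graph on `G`. -/
def IsRegularSetOfGroup {G : Type*} [Group G] (R : Set G) (κ τ : ℤ) : Prop :=
  ∃ X : Set G, IsConnectionSet X ∧ IsRegularSetOfCayley X R κ τ

/-- `R` is a perfect code of the group `G`: a `(0,1)`-regular set of `G`. -/
def IsPerfectCodeOfGroup {G : Type*} [Group G] (R : Set G) : Prop :=
  IsRegularSetOfGroup R 0 1

/-- `C` is a code of `G` with respect to `Y` with parameter `l`: every `g ∈ G` has
exactly `l` factorizations `g = c * y` with `c ∈ C`, `y ∈ Y`. -/
def IsCodeOfGroup {G : Type*} [Group G] (C Y : Set G) (l : ℕ) : Prop :=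
  ∀ g : G, {p : G × G | p.1 ∈ C ∧ p.2 ∈ Y ∧ g = p.1 * p.2}.ncard = l

/-!
Choose the connection set `X` coset by coset. Inside `H` take an inverse-closed subset of `H \ {1}`
of size `κ`: since `|H|` is odd, `H \ {1}` splits into pairs `{x, x⁻¹}`, and `κ` is even. In every
other coset `gH` take `τ` elements, compatibly with inversion, which maps `gH` onto `g⁻¹H`. When
`gH ≠ g⁻¹H` the choice in `gH` dictates the one in `g⁻¹H`; when `gH = g⁻¹H` the coset is
inverse-closed of odd size `|H|`, so it contains an element with `x⁻¹ = x`, and inverse-closed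
subsets of every size up to `|H|` exist. Then every vertex `g` has exactly `|X ∩ g⁻¹H|`
neighbours in `H`.
-/

open Finset

namespace Finset

variable {α : Type*} [InvolutiveInv α] [DecidableEq α]

protected theorem inv_inv (s : Finset α) : s⁻¹⁻¹ = s := by
  ext x
  rw [mem_inv', mem_inv', inv_inv]

theorem even_card_of_inv_eq_self {S : Finset α} (hS : S⁻¹ = S) (hfree : ∀ x ∈ S, x⁻¹ ≠ x) :
    Even #S := by
  have hsum : ∑ _x ∈ S, (1 : ZMod 2) = 0 :=
    sum_involution (fun x _ => x⁻¹) (fun _ _ => by decide) (fun x hx _ => hfree x hx)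
      (fun x hx => by rwa [← mem_inv', hS]) (fun x _ => inv_inv x)
  rw [sum_const, nsmul_one, ZMod.natCast_eq_zero_iff_even] at hsum
  exact hsum

theorem exists_inv_eq_self_of_odd_card {S : Finset α} (hS : S⁻¹ = S) (hodd : Odd #S) :
    ∃ x ∈ S, x⁻¹ = x := by
  by_contra! hfree
  exact Nat.not_even_iff_odd.mpr hodd (even_card_of_inv_eq_self hS hfree)

theorem inv_eq_self_of_forall_inv_eq {T : Finset α} (hT : ∀ x ∈ T, x⁻¹ = x) : T⁻¹ = T := by
  ext x
  rw [mem_inv']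
  refine ⟨fun h => ?_, fun h => by rwa [hT x h]⟩
  have hx := hT _ h
  rw [inv_inv] at hx
  rwa [hx]

theorem inv_sdiff_pair {S : Finset α} (hS : S⁻¹ = S) (y : α) :
    (S \ {y, y⁻¹})⁻¹ = S \ {y, y⁻¹} := by
  ext x
  rw [mem_inv', mem_sdiff, mem_sdiff, ← mem_inv', hS]
  simp only [mem_insert, mem_singleton, inv_eq_iff_eq_inv, inv_inv]
  tauto

theorem exists_subset_inv_eq_card_eq {S : Finset α} (hS : S⁻¹ = S) {k : ℕ} (hk : k ≤ #S)
    (hpar : Even k ∨ ∃ x ∈ S, x⁻¹ = x) : ∃ T ⊆ S, T⁻¹ = T ∧ #T = k := by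
  induction k using Nat.strong_induction_on generalizing S with
  | _ k ih =>
  by_cases hfix : ∀ x ∈ S, x⁻¹ = x
  · obtain ⟨T, hTS, hTk⟩ := exists_subset_card_eq hk
    exact ⟨T, hTS, inv_eq_self_of_forall_inv_eq fun x hx => hfix x (hTS hx), hTk⟩
  push Not at hfix
  obtain ⟨y, hyS, hy⟩ := hfix
  have hyS' : y⁻¹ ∈ S := by rw [← mem_inv', hS]; exact hyS
  have hpair : {y, y⁻¹} ⊆ S := insert_subset hyS (singleton_subset_iff.mpr hyS')
  have hcard_pair : #{y, y⁻¹} = 2 := card_pair (Ne.symm hy)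
  match k, hk, hpar with
  | 0, _, _ => exact ⟨∅, empty_subset S, inv_empty, rfl⟩
  | 1, _, hpar =>
    obtain ⟨x, hxS, hx⟩ := hpar.resolve_left (by decide)
    exact ⟨{x}, singleton_subset_iff.mpr hxS, by rw [inv_singleton, hx], rfl⟩
  | k + 2, hk, hpar =>
    have hpar' : Even k ∨ ∃ x ∈ S \ {y, y⁻¹}, x⁻¹ = x := by
      refine hpar.imp (fun h => by simpa [Nat.even_add] using h) fun ⟨x, hxS, hx⟩ => ⟨x, ?_, hx⟩
      simp only [mem_sdiff, mem_insert, mem_singleton]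
      refine ⟨hxS, ?_⟩
      rintro (rfl | rfl)
      · exact hy hx
      · rw [inv_inv] at hx
        exact hy hx.symm
    obtain ⟨T, hTS, hT, hTk⟩ := ih k (by omega) (inv_sdiff_pair hS y)
      (by rw [card_sdiff_of_subset hpair, hcard_pair]; omega) hpar'
    refine ⟨T ∪ {y, y⁻¹}, union_subset (hTS.trans sdiff_subset) hpair, ?_, ?_⟩
    · ext x
      rw [mem_inv', mem_union, mem_union, ← mem_inv', hT]
      simp only [mem_insert, mem_singleton, inv_eq_iff_eq_inv, inv_inv]
      tauto
    · rw [card_union_of_disjoint (disjoint_of_subset_left hTS sdiff_disjoint), hTk, hcard_pair]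

end Finset

theorem exists_inv_compatible_subsets {ι α : Type*} [InvolutiveInv ι] [InvolutiveInv α]
    [DecidableEq α] (F : ι → Finset α) (hF : ∀ i, F i⁻¹ = (F i)⁻¹) (d : ι → ℕ)
    (hd : ∀ i, d i⁻¹ = d i) (hle : ∀ i, d i ≤ #(F i))
    (hpar : ∀ i, i⁻¹ = i → Even (d i) ∨ ∃ x ∈ F i, x⁻¹ = x) :
    ∃ T : ι → Finset α, (∀ i, T i ⊆ F i) ∧ (∀ i, T i⁻¹ = (T i)⁻¹) ∧ ∀ i, #(T i) = d i := by
  have hS : ∀ i, ∃ S ⊆ F i, #S = d i ∧ (i⁻¹ = i → S⁻¹ = S) := fun i => by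
    by_cases hi : i⁻¹ = i
    · obtain ⟨S, hSF, hS, hSd⟩ :=
        exists_subset_inv_eq_card_eq (by rw [← hF, hi]) (hle i) (hpar i hi)
      exact ⟨S, hSF, hSd, fun _ => hS⟩
    · obtain ⟨S, hSF, hSd⟩ := exists_subset_card_eq (hle i)
      exact ⟨S, hSF, hSd, fun h => absurd h hi⟩
  choose S hSF hSd hSinv using hS
  -- pairs `{i, i⁻¹}` with `i ≠ i⁻¹` are handled by choosing `S i` at the smaller index only
  let _ : LinearOrder ι := IsWellOrder.linearOrder WellOrderingRel
  classical
  refine ⟨fun i => if i⁻¹ < i then (S i⁻¹)⁻¹ else S i, fun i => ?_, fun i => ?_, fun i => ?_⟩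
  · dsimp only
    split_ifs
    · simpa [hF, Finset.inv_inv] using inv_subset_inv (hSF i⁻¹)
    · exact hSF i
  · rcases lt_trichotomy i⁻¹ i with h | h | h
    · simp [h, h.not_gt, Finset.inv_inv]
    · simp [h, hSinv i h]
    · simp [h, h.not_gt]
  · dsimp only
    split_ifs
    · rw [card_inv, hSd, hd]
    · exact hSd i

section Cayley

variable {G : Type*} [Group G]

theorem ncard_sep_inv_mul_mem (X R : Set G) (g : G) :
    {s ∈ R | g⁻¹ * s ∈ X}.ncard = (X ∩ g⁻¹ • R).ncard := by
  have : {s ∈ R | g⁻¹ * s ∈ X} = g • (X ∩ g⁻¹ • R) := by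
    ext s
    simp only [Set.mem_ofPred_eq, Set.mem_smul_set_iff_inv_smul_mem, Set.mem_inter_iff, inv_inv,
      smul_eq_mul, mul_inv_cancel_left]
    tauto
  rw [this, Set.ncard_smul_set]

theorem isRegularSetOfCayley_iff {X R : Set G} {κ τ : ℤ} :
    IsRegularSetOfCayley X R κ τ ↔
      (∀ r ∈ R, ((X ∩ r⁻¹ • R).ncard : ℤ) = κ) ∧ ∀ g ∉ R, ((X ∩ g⁻¹ • R).ncard : ℤ) = τ := by
  simp only [IsRegularSetOfCayley, ncard_sep_inv_mul_mem]

theorem QuotientGroup.card_filter_mk_eq [Fintype G] (H : Subgroup G)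
    [DecidableEq (G ⧸ H)] (q : G ⧸ H) : #{g : G | (g : G ⧸ H) = q} = Nat.card H := by
  have h := QuotientGroup.card_preimage_mk H {q}
  simp only [Set.preimage, Set.mem_singleton_iff, Nat.card_eq_card_toFinset, Set.toFinset_ofPred,
    Set.toFinset_singleton, card_singleton, mul_one] at h
  exact h

theorem Subgroup.exists_isConnectionSet_ncard_inter_smul [Fintype G] (H : Subgroup G) [H.Normal]
    (hodd : Odd (Nat.card H)) (d : G ⧸ H → ℕ) (hd : ∀ q, d q⁻¹ = d q)
    (hd_one : d 1 < Nat.card H) (hd_one_even : Even (d 1)) (hle : ∀ q, d q ≤ Nat.card H) :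
    ∃ X : Set G, IsConnectionSet X ∧ ∀ g : G, (X ∩ g • (H : Set G)).ncard = d g := by
  classical
  let F : G ⧸ H → Finset G := fun q => ({g : G | (g : G ⧸ H) = q} : Finset G).erase 1
  have hF_inv : ∀ q, F q⁻¹ = (F q)⁻¹ := fun q => by
    ext g
    simp [F, mem_inv', inv_eq_iff_eq_inv]
  have hF_card : ∀ q, #(F q) = if q = 1 then Nat.card H - 1 else Nat.card H := fun q => by
    simp only [F, card_erase_eq_ite, QuotientGroup.card_filter_mk_eq, mem_filter_univ,
      QuotientGroup.mk_one, @eq_comm _ (1 : G ⧸ H)]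
  obtain ⟨T, hTF, hT_inv, hT_card⟩ := exists_inv_compatible_subsets F hF_inv d hd
    (fun q => by rw [hF_card]; split_ifs with hq <;> [(subst hq; omega); exact hle q])
    (fun q hq => by
      by_cases hq1 : q = 1
      · exact .inl (hq1 ▸ hd_one_even)
      · refine .inr (exists_inv_eq_self_of_odd_card (by rw [← hF_inv, hq]) ?_)
        rwa [hF_card, if_neg hq1])
  have hT_fiber : ∀ {q : G ⧸ H} {g : G}, g ∈ T q → (g : G ⧸ H) = q := fun hg => by
    simpa [F] using (mem_erase.mp (hTF _ hg)).2
  refine ⟨{g : G | g ∈ T g}, ⟨fun h => ?_, ?_⟩, fun g => ?_⟩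
  · simpa [F] using hTF 1 h
  · ext g
    simp [hT_inv, mem_inv']
  · have : {g : G | g ∈ T g} ∩ g • (H : Set G) = T g := by
      ext y
      simp only [Set.mem_inter_iff, Set.mem_ofPred_eq, mem_leftCoset_iff, SetLike.mem_coe,
        ← QuotientGroup.eq]
      exact ⟨fun ⟨hy, hgy⟩ => hgy ▸ hy, fun hy => ⟨(hT_fiber hy).symm ▸ hy, (hT_fiber hy).symm⟩⟩
    rw [this, Set.ncard_coe_finset, hT_card]

end Cayley

theorem statement_2_general {G : Type*} [Group G] [Fintype G] (H : Subgroup G) [H.Normal]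
    (hodd : Odd (Nat.card H)) (κ τ : ℤ)
    (hκ0 : 0 ≤ κ) (hκ1 : κ ≤ (Nat.card H : ℤ) - 1)
    (hτ0 : 1 ≤ τ) (hτ1 : τ ≤ (Nat.card H : ℤ))
    (hgcd : ((Nat.gcd 2 (Nat.card H - 1) : ℕ) : ℤ) ∣ κ) :
    IsRegularSetOfGroup (H : Set G) κ τ := by
  classical
  have hκ_even : Even κ.toNat := by
    have h2 : 2 ∣ Nat.card H - 1 := (Nat.Odd.sub_odd hodd odd_one).two_dvd
    rw [Nat.gcd_eq_left h2, Nat.cast_ofNat] at hgcd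
    obtain ⟨m, hm⟩ := hgcd
    exact ⟨m.toNat, by omega⟩
  let d : G ⧸ H → ℕ := fun q => if q = 1 then κ.toNat else τ.toNat
  obtain ⟨X, hX, hX_card⟩ := H.exists_isConnectionSet_ncard_inter_smul hodd d
    (fun q => by simp [d]) (by dsimp only [d]; rw [if_pos rfl]; omega) (by simpa [d])
    (fun q => by dsimp only [d]; split_ifs <;> omega)
  refine ⟨X, hX, isRegularSetOfCayley_iff.mpr ⟨fun r hr => ?_, fun g hg => ?_⟩⟩
  · simp only [hX_card, d, QuotientGroup.eq_one_iff, H.inv_mem hr, if_true]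
    omega
  · simp only [hX_card, d, QuotientGroup.eq_one_iff, inv_mem_iff, SetLike.mem_coe.not.mp hg,
      if_false]
    omega

theorem statement_2 {G : Type*} [Group G] [Fintype G] (H : Subgroup G) [H.Normal]
    (hH : H ≠ ⊥) (hodd : Odd (Nat.card H)) (κ τ : ℤ)
    (hκ0 : 0 ≤ κ) (hκ1 : κ ≤ (Nat.card H : ℤ) - 1)
    (hτ0 : 1 ≤ τ) (hτ1 : τ ≤ (Nat.card H : ℤ))
    (hgcd : ((Nat.gcd 2 (Nat.card H - 1) : ℕ) : ℤ) ∣ κ) :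
    IsRegularSetOfGroup (H : Set G) κ τ :=
  statement_2_general H hodd κ τ hκ0 hκ1 hτ0 hτ1 hgcd
end

section
/- Let G be a finite group, H a non-trivial normal subgroup of G, and τ an integer with 1 ≤ τ ≤ |H|. If τ is odd, then H is a (0,τ)-regular set of G if and only if H is a perfect code of G. -/
open Pointwise

/-!
Translating by `g`, the neighbours in `H` of a vertex `g` of `Cay(G, X)` correspond to
`X ∩ g⁻¹H`, so `H` is a `(0, τ)`-regular set of `Cay(G, X)` exactly when `X` avoids `H` and meets
every other coset of `H` in `τ` elements. If `gH` is an involution of `G ⧸ H` and `τ` is odd,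
inversion is an involution of the odd set `X ∩ gH` and therefore has a fixed point: every
involution of `G ⧸ H` lifts to an involution of `G`. Conversely, if involutions lift, one picks
`τ` elements in each nontrivial coset, inverse-closed in a self-inverse coset (an odd number is
possible thanks to the lifted involution) and mutually inverse in a pair of cosets `gH ≠ g⁻¹H`.
Hence, for odd `τ`, whether `H` is a `(0, τ)`-regular set of `G` does not depend on `τ`.
-/

section InvolutiveInv

variable {α : Type*} [InvolutiveInv α] {s : Set α}

theorem exists_inv_eq_self_of_odd_ncard (hs : s⁻¹ = s) (hodd : Odd s.ncard) :
    ∃ x ∈ s, x⁻¹ = x := by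
  have : Finite s := Set.finite_coe_iff.mpr (Set.finite_of_ncard_pos hodd.pos)
  have := Fintype.ofFinite s
  let σ : Equiv.Perm s := (Equiv.inv α).subtypePerm fun x => by
    rw [Equiv.inv_apply, ← Set.mem_inv, hs]
  have hσ : σ ^ 2 ^ 1 = 1 := by ext x; simp [σ, sq]
  have h2 : ¬ 2 ∣ Fintype.card s := by
    rwa [Fintype.card_eq_nat_card, Nat.card_coe_set_eq, ← even_iff_two_dvd, Nat.not_even_iff_odd]
  obtain ⟨⟨x, hx⟩, hfix⟩ := Equiv.Perm.exists_fixed_point_of_prime h2 hσ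
  exact ⟨x, hx, congrArg Subtype.val hfix⟩

theorem exists_subset_inv_eq_self_ncard_eq_two (hs : s⁻¹ = s) (h : 1 < s.ncard) :
    ∃ u ⊆ s, u⁻¹ = u ∧ u.ncard = 2 := by
  by_cases hfree : ∃ x ∈ s, x⁻¹ ≠ x
  · obtain ⟨x, hx, hne⟩ := hfree
    have hx' : x⁻¹ ∈ s := by rwa [← Set.mem_inv, hs]
    refine ⟨{x, x⁻¹}, Set.insert_subset hx (Set.singleton_subset_iff.mpr hx'), ?_,
      Set.ncard_pair hne.symm⟩
    rw [Set.inv_insert, Set.inv_singleton, inv_inv, Set.pair_comm]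
  · push Not at hfree
    obtain ⟨x, hx, y, hy, hne⟩ := (Set.one_lt_ncard (Set.finite_of_ncard_pos (by omega))).mp h
    refine ⟨{x, y}, Set.insert_subset hx (Set.singleton_subset_iff.mpr hy), ?_, Set.ncard_pair hne⟩
    rw [Set.inv_insert, Set.inv_singleton, hfree x hx, hfree y hy]

theorem exists_subset_inv_eq_self_ncard_eq_of_odd (hs : s⁻¹ = s) {x₀ : α} (hx₀ : x₀ ∈ s)
    (hfix : x₀⁻¹ = x₀) {k : ℕ} (hk : Odd k) (hks : k ≤ s.ncard) :
    ∃ t ⊆ s, t⁻¹ = t ∧ t.ncard = k := by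
  have hfin : s.Finite := Set.finite_of_ncard_pos (hk.pos.trans_le hks)
  obtain ⟨m, rfl⟩ := hk
  induction m with
  | zero => exact ⟨{x₀}, by simpa, by simp [hfix], by simp⟩
  | succ m ih =>
    obtain ⟨t, hts, ht, hcard⟩ := ih (by omega)
    have hrest : (s \ t)⁻¹ = s \ t := by
      ext x
      rw [Set.mem_inv, Set.mem_sdiff, Set.mem_sdiff, ← Set.mem_inv, hs, ← Set.mem_inv, ht]
    have hrest_card : 1 < (s \ t).ncard := by
      rw [Set.ncard_sdiff hts (hfin.subset hts)]
      omega
    obtain ⟨u, hu, hu_inv, hu_card⟩ := exists_subset_inv_eq_self_ncard_eq_two hrest hrest_card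
    refine ⟨t ∪ u, Set.union_subset hts (hu.trans Set.sdiff_subset), by
      rw [Set.union_inv, ht, hu_inv], ?_⟩
    rw [Set.ncard_union_eq (Set.disjoint_sdiff_right.mono_right hu) (hfin.subset hts)
      (hfin.subset (hu.trans Set.sdiff_subset))]
    omega

end InvolutiveInv

theorem exists_choice_map_inv {Q β : Type*} [InvolutiveInv Q] [InvolutiveInv β]
    (P : Q → β → Prop) (hP : ∀ q b, P q b → P q⁻¹ b⁻¹)
    (hex : ∀ q, ∃ b, P q b ∧ (q⁻¹ = q → b⁻¹ = b)) :
    ∃ S : Q → β, ∀ q, P q (S q) ∧ S q⁻¹ = (S q)⁻¹ := by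
  let _ : LinearOrder Q := IsWellOrder.linearOrder WellOrderingRel
  choose T hPT hT using hex
  -- Choose at the smaller element of each pair `{q, q⁻¹}` and transport by inversion.
  refine ⟨fun q => if q ≤ q⁻¹ then T q else (T q⁻¹)⁻¹, fun q => ⟨?_, ?_⟩⟩
  · dsimp only
    split_ifs
    · exact hPT q
    · simpa using hP _ _ (hPT q⁻¹)
  · rcases lt_trichotomy q q⁻¹ with h | h | h
    · simp [h.le, not_le.mpr h]
    · have hq : q⁻¹ = q := h.symm
      simp only [hq, le_refl, if_true]
      exact (hT q hq).symm
    · simp [h.le, not_le.mpr h]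

section Cayley

variable {G : Type*} [Group G]

theorem ncard_neighbors_subgroup (X : Set G) (H : Subgroup G) (g : G) :
    {s ∈ (H : Set G) | g⁻¹ * s ∈ X}.ncard = {x ∈ X | (x : G ⧸ H) = (g⁻¹ : G)}.ncard := by
  have himage : {s ∈ (H : Set G) | g⁻¹ * s ∈ X} =
      (g * ·) '' {x ∈ X | (x : G ⧸ H) = (g⁻¹ : G)} := by
    rw [Set.image_mul_left]
    ext s
    simp [QuotientGroup.eq, and_comm]
  rw [himage, Set.ncard_image_of_injective _ (mul_right_injective g)]

theorem isRegularSetOfCayley_subgroup_iff (X : Set G) (H : Subgroup G) (κ τ : ℤ) :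
    IsRegularSetOfCayley X H κ τ ↔
      (∀ g ∈ H, ({x ∈ X | (x : G ⧸ H) = g}.ncard : ℤ) = κ) ∧
        ∀ g ∉ H, ({x ∈ X | (x : G ⧸ H) = g}.ncard : ℤ) = τ := by
  simp only [IsRegularSetOfCayley, ncard_neighbors_subgroup]
  refine ⟨fun ⟨hin, hout⟩ => ⟨fun g hg => ?_, fun g hg => ?_⟩,
    fun ⟨hin, hout⟩ => ⟨fun r hr => ?_, fun g hg => ?_⟩⟩
  · simpa using hin g⁻¹ (inv_mem hg)
  · simpa using hout g⁻¹ (by simpa using hg)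
  · exact hin r⁻¹ (inv_mem hr)
  · exact hout g⁻¹ (by simpa using hg)

end Cayley

section NormalSubgroup

variable {G : Type*} [Group G] {H : Subgroup G} [H.Normal]

def InvolutionsLift (H : Subgroup G) [H.Normal] : Prop :=
  ∀ q : G ⧸ H, q⁻¹ = q → ∃ x : G, (x : G ⧸ H) = q ∧ x⁻¹ = x

theorem involutionsLift_of_isRegularSetOfGroup {κ τ : ℤ} (hτ : Odd τ)
    (h : IsRegularSetOfGroup (H : Set G) κ τ) : InvolutionsLift H := by
  obtain ⟨X, ⟨-, hX⟩, hreg⟩ := h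
  have hout := ((isRegularSetOfCayley_subgroup_iff X H κ τ).mp hreg).2
  intro q hq
  induction q using QuotientGroup.induction_on with | H g => ?_
  by_cases hg : g ∈ H
  · refine ⟨1, ?_, inv_one⟩
    rw [QuotientGroup.mk_one, eq_comm, QuotientGroup.eq_one_iff]
    exact hg
  set C := {x ∈ X | (x : G ⧸ H) = g}
  have hC : C⁻¹ = C := by
    ext x
    simp only [C, Set.mem_inv, Set.mem_ofPred_eq, QuotientGroup.mk_inv, inv_eq_iff_eq_inv, hq]
    rw [← Set.mem_inv, hX]
  have hodd : Odd C.ncard := by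
    rw [← Int.odd_coe_nat, hout g hg]
    exact hτ
  obtain ⟨x, ⟨-, hx⟩, hfix⟩ := exists_inv_eq_self_of_odd_ncard hC hodd
  exact ⟨x, hx, hfix⟩

theorem exists_subset_coset_ncard_eq (hH : InvolutionsLift H) {k : ℕ} (hk : Odd k)
    (hkH : k ≤ Nat.card H) (q : G ⧸ H) :
    ∃ t ⊆ {x : G | (x : G ⧸ H) = q}, t.ncard = k ∧ (q⁻¹ = q → t⁻¹ = t) := by
  have hcoset : {x : G | (x : G ⧸ H) = q}.ncard = Nat.card H := by
    rw [← Nat.card_coe_set_eq]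
    exact (QuotientGroup.card_preimage_mk H {q}).trans (by simp)
  by_cases hq : q⁻¹ = q
  · obtain ⟨x₀, rfl, hx₀⟩ := hH q hq
    have hinv : {x : G | (x : G ⧸ H) = x₀}⁻¹ = {x : G | (x : G ⧸ H) = x₀} := by
      ext x
      simp [inv_eq_iff_eq_inv, hq]
    obtain ⟨t, hts, ht, hcard⟩ :=
      exists_subset_inv_eq_self_ncard_eq_of_odd hinv rfl hx₀ hk (hcoset ▸ hkH)
    exact ⟨t, hts, hcard, fun _ => ht⟩
  · obtain ⟨t, hts, hcard⟩ := Set.exists_subset_card_eq (hcoset ▸ hkH)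
    exact ⟨t, hts, hcard, fun h => absurd h hq⟩

theorem isRegularSetOfGroup_of_involutionsLift (hH : InvolutionsLift H) {k : ℕ} (hk : Odd k)
    (hkH : k ≤ Nat.card H) : IsRegularSetOfGroup (H : Set G) 0 k := by
  obtain ⟨S, hS⟩ := exists_choice_map_inv
    (fun (q : G ⧸ H) (t : Set G) => t ⊆ {x : G | (x : G ⧸ H) = q} ∧ t.ncard = k)
    (fun _ _ h => ⟨fun _ hx => by simpa [inv_eq_iff_eq_inv] using h.1 hx,
      by rw [Set.ncard_inv, h.2]⟩)
    (fun q => by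
      obtain ⟨t, hsub, hcard, hinv⟩ := exists_subset_coset_ncard_eq hH hk hkH q
      exact ⟨t, ⟨hsub, hcard⟩, hinv⟩)
  set X : Set G := {x | (x : G ⧸ H) ≠ 1 ∧ x ∈ S x}
  refine ⟨X, ⟨by simp [X], ?_⟩,
    (isRegularSetOfCayley_subgroup_iff X H 0 k).mpr ⟨fun g hg => ?_, fun g hg => ?_⟩⟩
  · ext x
    simp [X, (hS x).2]
  · have hg1 : (g : G ⧸ H) = 1 := (QuotientGroup.eq_one_iff g).mpr hg
    have hempty : {x ∈ X | (x : G ⧸ H) = g} = ∅ :=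
      Set.eq_empty_of_forall_notMem fun _ ⟨⟨hx1, _⟩, hxg⟩ => hx1 (hxg.trans hg1)
    rw [hempty, Set.ncard_empty, Nat.cast_zero]
  · have hg1 : (g : G ⧸ H) ≠ 1 := mt (QuotientGroup.eq_one_iff g).mp hg
    have hfiber : {x ∈ X | (x : G ⧸ H) = g} = S g := by
      ext x
      refine ⟨fun ⟨⟨_, hx⟩, hxg⟩ => hxg ▸ hx, fun hx => ?_⟩
      have hxg : (x : G ⧸ H) = g := (hS g).1.1 hx
      exact ⟨⟨hxg ▸ hg1, hxg ▸ hx⟩, hxg⟩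
    rw [hfiber, (hS g).1.2]

end NormalSubgroup

theorem statement_6_general {G : Type*} [Group G] [Fintype G] (H : Subgroup G) [H.Normal] (τ : ℤ)
    (hτ0 : 1 ≤ τ) (hτ1 : τ ≤ (Nat.card H : ℤ)) (hτodd : Odd τ) :
    IsRegularSetOfGroup (H : Set G) 0 τ ↔ IsPerfectCodeOfGroup (H : Set G) := by
  lift τ to ℕ using by omega
  have hτH : τ ≤ Nat.card H := by exact_mod_cast hτ1
  have hτ : Odd τ := by exact_mod_cast hτodd
  constructor
  · intro h
    exact_mod_cast isRegularSetOfGroup_of_involutionsLift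
      (involutionsLift_of_isRegularSetOfGroup hτodd h) odd_one Nat.card_pos
  · intro h
    exact isRegularSetOfGroup_of_involutionsLift
      (involutionsLift_of_isRegularSetOfGroup odd_one h) hτ hτH

theorem statement_6 {G : Type*} [Group G] [Fintype G] (H : Subgroup G) [H.Normal]
    (hH : H ≠ ⊥) (τ : ℤ)
    (hτ0 : 1 ≤ τ) (hτ1 : τ ≤ (Nat.card H : ℤ)) (hτodd : Odd τ) :
    IsRegularSetOfGroup (H : Set G) 0 τ ↔ IsPerfectCodeOfGroup (H : Set G) :=
  statement_6_general H τ hτ0 hτ1 hτodd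
end
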